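/- Let G be a simplicial group with N_m(G) trivial for all m > l, and let n > l. Then the following are equivalent: (i) the map y_{(n,l)} : G_n^{(l+1)} × G_{n-1}^{(l)} → G_n^{(l)}, (x,y) ↦ x·s_{n-1-l}(y), is a bijection; (ii) the restricted degeneracy s_{n-1-l} : G_{n-1}^{(l)} → G_n^{(l)} is an isomorphism; (iii) the restrictions of s_0, s_1, …, s_{n-1-l} to G_{n-1}^{(l)} → G_n^{(l)} are all equal and are isomorphisms with common inverse given by the (equal) restrictions of d_0, d_1, …, d_{n-l}. -/
import Mathlib


/-!
A simplicial group is given by groups `G n`, face maps `d n i : G (n+1) →* G n`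
(for `i ≤ n+1`) and degeneracy maps `s n i : G n →* G (n+1)` (for `i ≤ n`),
subject to the simplicial identities (taken as hypotheses below).
-/

variable (G : ℕ → Type) [∀ n, Group (G n)]

/-- `piece G d n k` is the subgroup `G_n^{(k)} = ⋂_{i = n-k+1}^{n} ker (d_i : G_n → G_{n-1})`
(the joint kernel of the top `k` face maps), with `G_0^{(0)} = G_0`.
In particular `piece G d n n` is the `n`-th Moore subgroup `N_n(G)`. -/
def piece (d : ∀ n, ℕ → (G (n + 1) →* G n)) : ∀ n, ℕ → Subgroup (G n)
  | 0, _ => ⊤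
  | (n + 1), k => ⨅ i ∈ Finset.Icc (n + 2 - k) (n + 1), (d n i).ker

theorem mem_piece_succ (d : ∀ n, ℕ → (G (n + 1) →* G n)) (n k : ℕ) (x : G (n + 1)) :
    x ∈ piece G d (n + 1) k ↔ ∀ i, n + 2 - k ≤ i → i ≤ n + 1 → d n i x = 1 := by
  simp [piece, Subgroup.mem_iInf, MonoidHom.mem_ker, Finset.mem_Icc, and_imp]

theorem s_mem_piece (d : ∀ n, ℕ → (G (n + 1) →* G n)) (s : ∀ n, ℕ → (G n →* G (n + 1)))
    (hds₄ : ∀ (n i j : ℕ), j < i → i ≤ n + 1 → ∀ x : G (n + 1),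
      d (n + 1) (i + 1) (s (n + 1) j x) = s n j (d n i x))
    (n k i : ℕ) (hk : k ≤ n) (hik : i + k ≤ n)
    (u : G n) (hu : u ∈ piece G d n k) : s n i u ∈ piece G d (n + 1) k := by
  cases n with
  | zero =>
    rw [mem_piece_succ]
    intro j h1 h2
    exact absurd h1 (by omega)
  | succ m =>
    rw [mem_piece_succ]
    intro j h1 h2
    obtain ⟨j', rfl⟩ : ∃ j', j = j' + 1 := ⟨j - 1, by omega⟩
    rw [hds₄ m j' i (by omega) (by omega) u,
      (mem_piece_succ G d m k u).mp hu j' (by omega) (by omega), map_one]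

theorem d_mem_piece (d : ∀ n, ℕ → (G (n + 1) →* G n))
    (hdd : ∀ (n i j : ℕ), i ≤ j → j ≤ n + 1 → ∀ x : G (n + 2),
      d n i (d (n + 1) (j + 1) x) = d n j (d (n + 1) i x))
    (n k j : ℕ) (hj : j + k ≤ n + 1) (x : G (n + 1))
    (hx : x ∈ piece G d (n + 1) k) : d n j x ∈ piece G d n k := by
  cases n with
  | zero => exact Subgroup.mem_top _
  | succ m =>
    rw [mem_piece_succ]
    intro i h1 h2
    rw [← hdd m j i (by omega) (by omega) x,
      (mem_piece_succ G d (m + 1) k x).mp hx (i + 1) (by omega) (by omega), map_one]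

theorem piece_trivial (d : ∀ n, ℕ → (G (n + 1) →* G n))
    (hdd : ∀ (n i j : ℕ), i ≤ j → j ≤ n + 1 → ∀ x : G (n + 2),
      d n i (d (n + 1) (j + 1) x) = d n j (d (n + 1) i x))
    (l : ℕ) (hlen : ∀ m : ℕ, l < m → piece G d m m = ⊥) :
    ∀ (j k : ℕ), l < k → piece G d (k + j) k = ⊥ := by
  intro j
  induction j with
  | zero => exact fun k hk => hlen k hk
  | succ j ih =>
    intro k hk
    rw [eq_bot_iff]
    intro x hx
    have hu : d (k + j) (j + 1) x ∈ piece G d (k + j) k :=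
      d_mem_piece G d hdd (k + j) k (j + 1) (by omega) x hx
    rw [ih k hk] at hu
    have hu1 : d (k + j) (j + 1) x = 1 := hu
    have h2 : x ∈ piece G d (k + j + 1) (k + 1) := by
      rw [mem_piece_succ]
      intro i h1 h2
      rcases Nat.lt_or_ge i (j + 2) with h | h
      · have : i = j + 1 := by omega
        rw [this]; exact hu1
      · exact (mem_piece_succ G d (k + j) k x).mp hx i (by omega) (by omega)
    have hb := ih (k + 1) (by omega)
    rw [show (k + 1) + j = (k + j) + 1 by omega] at hb
    rw [hb] at h2
    exact h2

theorem key_lemma (d : ∀ n, ℕ → (G (n + 1) →* G n)) (s : ∀ n, ℕ → (G n →* G (n + 1)))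
    (hdd : ∀ (n i j : ℕ), i ≤ j → j ≤ n + 1 → ∀ x : G (n + 2),
      d n i (d (n + 1) (j + 1) x) = d n j (d (n + 1) i x))
    (hds₁ : ∀ (n i j : ℕ), i < j → j ≤ n + 1 → ∀ x : G (n + 1),
      d (n + 1) i (s (n + 1) j x) = s n (j - 1) (d n i x))
    (hds₂ : ∀ (n j : ℕ), j ≤ n → ∀ x : G n, d n j (s n j x) = x)
    (hds₃ : ∀ (n j : ℕ), j ≤ n → ∀ x : G n, d n (j + 1) (s n j x) = x)
    (hds₄ : ∀ (n i j : ℕ), j < i → i ≤ n + 1 → ∀ x : G (n + 1),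
      d (n + 1) (i + 1) (s (n + 1) j x) = s n j (d n i x))
    (hss : ∀ (n i j : ℕ), i ≤ j → j ≤ n → ∀ x : G n,
      s (n + 1) i (s n j x) = s (n + 1) (j + 1) (s n i x))
    (l : ℕ) : ∀ t : ℕ,
    Set.BijOn (fun x => s (l + t) t x) (piece G d (l + t) l : Set (G (l + t)))
      (piece G d (l + t + 1) l : Set (G (l + t + 1))) →
    ((∀ i ≤ t, ∀ x ∈ piece G d (l + t) l, s (l + t) i x = s (l + t) t x) ∧
     (∀ j ≤ t + 1, ∀ y ∈ piece G d (l + t + 1) l,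
        d (l + t) j y ∈ piece G d (l + t) l ∧ d (l + t) j y = d (l + t) 0 y) ∧
     (∀ y ∈ piece G d (l + t + 1) l, s (l + t) t (d (l + t) 0 y) = y) ∧
     (∀ x ∈ piece G d (l + t) l, d (l + t) 0 (s (l + t) t x) = x)) := by
  intro t
  induction t with
  | zero =>
    intro hbij
    have hkey : ∀ x, ∀ y, s (l + 0) 0 x = y → d (l + 0) 0 y = x := by
      intro x y hxy
      rw [← hxy]; exact hds₂ (l + 0) 0 (by omega) x
    refine ⟨?_, ?_, ?_, ?_⟩
    · intro i hi x hx
      obtain rfl : i = 0 := by omega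
      rfl
    · intro j hj y hy
      obtain ⟨x, hx, hxy⟩ := hbij.surjOn hy
      dsimp only at hxy
      have hdy : d (l + 0) j y = x := by
        interval_cases j
        · rw [← hxy]; exact hds₂ (l + 0) 0 (by omega) x
        · rw [← hxy]; exact hds₃ (l + 0) 0 (by omega) x
      constructor
      · rw [hdy]; exact hx
      · rw [hdy, hkey x y hxy]
    · intro y hy
      obtain ⟨x, hx, hxy⟩ := hbij.surjOn hy
      dsimp only at hxy
      rw [hkey x y hxy]; exact hxy
    · intro x hx
      exact hkey x _ rfl
  | succ t ih =>
    intro hbij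
    have hbij' : Set.BijOn (fun x => s (l + t + 1) (t + 1) x)
        (piece G d (l + t + 1) l : Set (G (l + t + 1)))
        (piece G d (l + t + 2) l : Set (G (l + t + 2))) := hbij
    have hmap : ∀ i, i ≤ t + 1 → ∀ x ∈ piece G d (l + t + 1) l,
        s (l + t + 1) i x ∈ piece G d (l + t + 2) l := by
      intro i hi x hx
      exact s_mem_piece G d s hds₄ (l + t + 1) l i (by omega) (by omega) x hx
    have hF : ∀ x ∈ piece G d (l + t + 1) l, s (l + t) t (d (l + t) (t + 1) x) = x := by
      intro x hx
      obtain ⟨x', hx', hxe⟩ := hbij'.surjOn (hmap 0 (by omega) x hx)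
      dsimp only at hxe
      have h1 : x' = s (l + t) 0 (d (l + t) (t + 1) x) := by
        have e1 : d (l + t + 1) (t + 2) (s (l + t + 1) (t + 1) x') = x' :=
          hds₃ (l + t + 1) (t + 1) (by omega) x'
        have e2 : d (l + t + 1) (t + 2) (s (l + t + 1) 0 x)
            = s (l + t) 0 (d (l + t) (t + 1) x) :=
          hds₄ (l + t) (t + 1) 0 (by omega) (by omega) x
        rw [← e1, hxe, e2]
      have h2 : s (l + t + 1) 0 (s (l + t) t (d (l + t) (t + 1) x))
          = s (l + t + 1) 0 x := by
        rw [hss (l + t) 0 t (by omega) (by omega), ← h1, hxe]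
      have h3 := congrArg (d (l + t + 1) 0) h2
      rwa [hds₂ (l + t + 1) 0 (by omega), hds₂ (l + t + 1) 0 (by omega)] at h3
    have hw : ∀ x ∈ piece G d (l + t + 1) l, d (l + t) (t + 1) x ∈ piece G d (l + t) l := by
      intro x hx
      exact d_mem_piece G d hdd (l + t) l (t + 1) (by omega) x hx
    have hbij0 : Set.BijOn (fun x => s (l + t) t x)
        (piece G d (l + t) l : Set (G (l + t)))
        (piece G d (l + t + 1) l : Set (G (l + t + 1))) := by
      refine ⟨?_, ?_, ?_⟩
      · intro u hu
        exact s_mem_piece G d s hds₄ (l + t) l t (by omega) (by omega) u hu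
      · intro u hu v hv huv
        dsimp only at huv
        have h4 := congrArg (d (l + t) t) huv
        rwa [hds₂ (l + t) t (by omega), hds₂ (l + t) t (by omega)] at h4
      · intro x hx
        exact ⟨d (l + t) (t + 1) x, hw x hx, hF x hx⟩
    obtain ⟨iha, ihc, ihd, ihe⟩ := ih hbij0
    have hkey : ∀ x ∈ piece G d (l + t + 1) l, ∀ y,
        s (l + t + 1) (t + 1) x = y → d (l + t + 1) 0 y = x := by
      intro x hx y hxy
      rw [← hxy, hds₁ (l + t) 0 (t + 1) (by omega) (by omega) x]
      simp only [Nat.add_sub_cancel]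
      rw [← (ihc (t + 1) (by omega) x hx).2]
      exact hF x hx
    have ha : ∀ i, i ≤ t + 1 → ∀ x ∈ piece G d (l + t + 1) l,
        s (l + t + 1) i x = s (l + t + 1) (t + 1) x := by
      intro i hi x hx
      rcases Nat.eq_or_lt_of_le hi with rfl | hi'
      · rfl
      · have hit : i ≤ t := by omega
        have hwx := hw x hx
        calc s (l + t + 1) i x
            = s (l + t + 1) i (s (l + t) t (d (l + t) (t + 1) x)) := by rw [hF x hx]
          _ = s (l + t + 1) (t + 1) (s (l + t) i (d (l + t) (t + 1) x)) :=
              hss (l + t) i t hit (by omega) _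
          _ = s (l + t + 1) (t + 1) (s (l + t) t (d (l + t) (t + 1) x)) := by
              rw [iha i hit _ hwx]
          _ = s (l + t + 1) (t + 1) x := by rw [hF x hx]
    have hc : ∀ j, j ≤ t + 2 → ∀ y ∈ piece G d (l + t + 2) l,
        d (l + t + 1) j y ∈ piece G d (l + t + 1) l ∧
          d (l + t + 1) j y = d (l + t + 1) 0 y := by
      intro j hj y hy
      obtain ⟨x, hx, hxy⟩ := hbij'.surjOn hy
      dsimp only at hxy
      have hd0 : d (l + t + 1) 0 y = x := hkey x hx y hxy
      rcases Nat.lt_or_ge j (t + 1) with hjt | hjt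
      · have hthis : d (l + t + 1) j y = s (l + t) t (d (l + t) j x) := by
          rw [← hxy, hds₁ (l + t) j (t + 1) (by omega) (by omega) x]
          simp only [Nat.add_sub_cancel]
        obtain ⟨hm, he⟩ := ihc j (by omega) x hx
        constructor
        · rw [hthis]; exact hbij0.mapsTo hm
        · rw [hthis, he, hd0, ← (ihc (t + 1) (by omega) x hx).2]
          exact hF x hx
      · have hdy : d (l + t + 1) j y = x := by
          obtain rfl | rfl : j = t + 1 ∨ j = t + 2 := by omega
          · rw [← hxy]; exact hds₂ (l + t + 1) (t + 1) (by omega) x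
          · rw [← hxy]; exact hds₃ (l + t + 1) (t + 1) (by omega) x
        constructor
        · rw [hdy]; exact hx
        · rw [hdy, hd0]
    have hd' : ∀ y ∈ piece G d (l + t + 2) l,
        s (l + t + 1) (t + 1) (d (l + t + 1) 0 y) = y := by
      intro y hy
      obtain ⟨x, hx, hxy⟩ := hbij'.surjOn hy
      dsimp only at hxy
      rw [hkey x hx y hxy]; exact hxy
    have he' : ∀ x ∈ piece G d (l + t + 1) l,
        d (l + t + 1) 0 (s (l + t + 1) (t + 1) x) = x := by
      intro x hx
      exact hkey x hx _ rfl
    exact ⟨ha, hc, hd', he'⟩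

/-- Let `G` be a simplicial group with `N_m(G)` trivial for all `m > l`,
and let `n > l` (written `n = l + t + 1` with `t ≥ 0`).  Then the following are
equivalent:
(i) the map `y_{(n,l)} : G_n^{(l+1)} × G_{n-1}^{(l)} → G_n^{(l)}`, `(x,y) ↦ x * s_{n-1-l} y`,
is a bijection;
(ii) the restricted degeneracy `s_{n-1-l} : G_{n-1}^{(l)} → G_n^{(l)}` is an isomorphism;
(iii) the restrictions of `s_0, …, s_{n-1-l}` to `G_{n-1}^{(l)}` all coincide and are
isomorphisms onto `G_n^{(l)}` whose common inverse is given by the (mutually equal)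
restrictions of `d_0, …, d_{n-l}`. -/
theorem y_bijective_tfae
    (d : ∀ n, ℕ → (G (n + 1) →* G n)) (s : ∀ n, ℕ → (G n →* G (n + 1)))
    (hdd : ∀ (n i j : ℕ), i ≤ j → j ≤ n + 1 → ∀ x : G (n + 2),
      d n i (d (n + 1) (j + 1) x) = d n j (d (n + 1) i x))
    (hds₁ : ∀ (n i j : ℕ), i < j → j ≤ n + 1 → ∀ x : G (n + 1),
      d (n + 1) i (s (n + 1) j x) = s n (j - 1) (d n i x))
    (hds₂ : ∀ (n j : ℕ), j ≤ n → ∀ x : G n, d n j (s n j x) = x)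
    (hds₃ : ∀ (n j : ℕ), j ≤ n → ∀ x : G n, d n (j + 1) (s n j x) = x)
    (hds₄ : ∀ (n i j : ℕ), j < i → i ≤ n + 1 → ∀ x : G (n + 1),
      d (n + 1) (i + 1) (s (n + 1) j x) = s n j (d n i x))
    (hss : ∀ (n i j : ℕ), i ≤ j → j ≤ n → ∀ x : G n,
      s (n + 1) i (s n j x) = s (n + 1) (j + 1) (s n i x))
    (l : ℕ) (hlen : ∀ m : ℕ, l < m → piece G d m m = ⊥) (t : ℕ) :
    (Set.BijOn (fun p : G (l + t + 1) × G (l + t) => p.1 * s (l + t) t p.2)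
        ((piece G d (l + t + 1) (l + 1) : Set (G (l + t + 1))) ×ˢ
          (piece G d (l + t) l : Set (G (l + t))))
        (piece G d (l + t + 1) l : Set (G (l + t + 1))) ↔
      Set.BijOn (fun x => s (l + t) t x)
        (piece G d (l + t) l : Set (G (l + t)))
        (piece G d (l + t + 1) l : Set (G (l + t + 1)))) ∧
    (Set.BijOn (fun x => s (l + t) t x)
        (piece G d (l + t) l : Set (G (l + t)))
        (piece G d (l + t + 1) l : Set (G (l + t + 1))) ↔
      ((∀ i ≤ t, ∀ x ∈ piece G d (l + t) l, s (l + t) i x = s (l + t) t x) ∧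
       Set.BijOn (fun x => s (l + t) t x)
         (piece G d (l + t) l : Set (G (l + t)))
         (piece G d (l + t + 1) l : Set (G (l + t + 1))) ∧
       (∀ j ≤ t + 1, ∀ y ∈ piece G d (l + t + 1) l,
         d (l + t) j y ∈ piece G d (l + t) l ∧ d (l + t) j y = d (l + t) 0 y) ∧
       (∀ y ∈ piece G d (l + t + 1) l, s (l + t) t (d (l + t) 0 y) = y) ∧
       (∀ x ∈ piece G d (l + t) l, d (l + t) 0 (s (l + t) t x) = x))) := by
  have hbot : piece G d (l + t + 1) (l + 1) = ⊥ := by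
    have hb := piece_trivial G d hdd l hlen t (l + 1) (Nat.lt_succ_self l)
    rw [show (l + 1) + t = (l + t) + 1 by omega] at hb
    exact hb
  have h1mem : (1 : G (l + t + 1)) ∈ (piece G d (l + t + 1) (l + 1) : Set (G (l + t + 1))) :=
    (piece G d (l + t + 1) (l + 1)).one_mem
  constructor
  · constructor
    · intro hbij
      refine ⟨?_, ?_, ?_⟩
      · intro x hx
        have h := hbij.mapsTo (Set.mk_mem_prod h1mem hx)
        simpa using h
      · intro x hx y hy hxy
        have h := hbij.injOn (Set.mk_mem_prod h1mem hx) (Set.mk_mem_prod h1mem hy)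
          (by simpa using hxy)
        exact congrArg Prod.snd h
      · intro z hz
        obtain ⟨p, hp, hpz⟩ := hbij.surjOn hz
        have hp1 : p.1 = 1 := by
          have h := hp.1
          rw [hbot] at h
          simpa using h
        refine ⟨p.2, hp.2, ?_⟩
        dsimp only at hpz ⊢
        rw [← hpz, hp1, one_mul]
    · intro hs
      refine ⟨?_, ?_, ?_⟩
      · rintro ⟨a, b⟩ ⟨ha, hb⟩
        have ha1 : a = 1 := by rw [hbot] at ha; simpa using ha
        dsimp only
        rw [ha1, one_mul]
        exact hs.mapsTo hb
      · rintro ⟨a, b⟩ ⟨ha, hb⟩ ⟨a', b'⟩ ⟨ha', hb'⟩ hab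
        have ha1 : a = 1 := by rw [hbot] at ha; simpa using ha
        have ha1' : a' = 1 := by rw [hbot] at ha'; simpa using ha'
        subst ha1; subst ha1'
        dsimp only at hab
        rw [one_mul, one_mul] at hab
        have h := hs.injOn hb hb' hab
        exact congrArg (Prod.mk 1) h
      · intro z hz
        obtain ⟨x, hx, hxz⟩ := hs.surjOn hz
        refine ⟨(1, x), Set.mk_mem_prod h1mem hx, ?_⟩
        dsimp only at hxz ⊢
        rw [one_mul]
        exact hxz
  · constructor
    · intro hbij
      obtain ⟨ha, hc, hd, he⟩ := key_lemma G d s hdd hds₁ hds₂ hds₃ hds₄ hss l t hbij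
      exact ⟨ha, hbij, hc, hd, he⟩
    · rintro ⟨-, h, -⟩
      exact h
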